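/- Let M be a matching of maximum weight among all matchings of size n/3 in G. Then w(M) ≥ Σ_{i=1}^{8} Σ_{xyz ∈ P*_i} max{w(xy), w(yz)}, and for each i ∈ {1, …, 8}, Σ_{xyz ∈ P*_i} max{w(xy), w(yz)} ≥ max{w(X_i), w(Y_i)}. -/

import Mathlib

open Finset
open scoped Classical

namespace MW3PP

/-- A 3-path `xyz`: a path on three distinct vertices with middle vertex `y`. -/
structure P3 (V : Type*) where
  x : V
  y : V
  z : V
  hxy : x ≠ y
  hyz : y ≠ z
  hxz : x ≠ z

variable {V : Type*} [Fintype V] [DecidableEq V]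

/-- The vertex set of a 3-path. -/
def P3.verts (p : P3 V) : Finset V := {p.x, p.y, p.z}

/-- The two edges of a 3-path. -/
def P3.edges (p : P3 V) : Finset (Sym2 V) := {s(p.x, p.y), s(p.y, p.z)}

/-- The weight of a 3-path. -/
def P3.wt (w : Sym2 V → ℝ) (p : P3 V) : ℝ := w s(p.x, p.y) + w s(p.y, p.z)

/-- The total weight of a set of edges. -/
def ew (w : Sym2 V → ℝ) (F : Finset (Sym2 V)) : ℝ := ∑ e ∈ F, w e

/-- The total weight of a set of 3-paths. -/
def pw (w : Sym2 V → ℝ) (P : Finset (P3 V)) : ℝ := ∑ p ∈ P, p.wt w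

/-- `∑_{xyz ∈ S} max (w (xy)) (w (yz))`. -/
def maxSum (w : Sym2 V → ℝ) (S : Finset (P3 V)) : ℝ :=
  ∑ p ∈ S, max (w s(p.x, p.y)) (w s(p.y, p.z))

/-- A perfect 3-path packing: `n/3` pairwise vertex-disjoint 3-paths covering all vertices. -/
def IsPacking (P : Finset (P3 V)) : Prop :=
  P.card = Fintype.card V / 3 ∧
  (∀ p ∈ P, ∀ q ∈ P, p ≠ q → Disjoint p.verts q.verts) ∧
  (∀ v : V, ∃ p ∈ P, v ∈ p.verts)

/-- A maximum-weight perfect 3-path packing. -/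
def IsMaxPacking (w : Sym2 V → ℝ) (P : Finset (P3 V)) : Prop :=
  IsPacking P ∧ ∀ Q : Finset (P3 V), IsPacking Q → pw w Q ≤ pw w P

/-- A matching: a set of pairwise vertex-disjoint (non-loop) edges. -/
def IsMatching (M : Finset (Sym2 V)) : Prop :=
  (∀ e ∈ M, ¬ e.IsDiag) ∧
  ∀ e ∈ M, ∀ f ∈ M, e ≠ f → ∀ v : V, v ∈ e → v ∉ f

/-- A maximum-weight matching among all matchings of size `k`. -/
def IsMaxMatchingOfSize (w : Sym2 V → ℝ) (k : ℕ) (M : Finset (Sym2 V)) : Prop :=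
  IsMatching M ∧ M.card = k ∧
  ∀ M' : Finset (Sym2 V), IsMatching M' → M'.card = k → ew w M' ≤ ew w M

/-- `v ∈ V(M)` : vertex `v` is covered by the matching `M`. -/
def covered (M : Finset (Sym2 V)) (v : V) : Prop := ∃ e ∈ M, v ∈ e

/-- `e_u` : the edge of `M` containing `u` (junk value if there is none). -/
noncomputable def eMatch (M : Finset (Sym2 V)) (u : V) : Sym2 V :=
  if h : ∃ e ∈ M, u ∈ e then h.choose else s(u, u)

/-- The cost `c` of an edge with respect to a matching `M`:
`c(uv) = w(uv) - min (w (e_u)) (w (e_v))` if both endpoints are covered by `M`,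
and `c(uv) = w(uv)` otherwise. -/
noncomputable def cost (w : Sym2 V → ℝ) (M : Finset (Sym2 V)) : Sym2 V → ℝ :=
  Sym2.lift ⟨fun u v =>
    if covered M u ∧ covered M v then
      w s(u, v) - min (w (eMatch M u)) (w (eMatch M v))
    else w s(u, v), by
      intro u v
      dsimp only
      by_cases h : covered M u ∧ covered M v
      · rw [if_pos h, if_pos (show covered M v ∧ covered M u from ⟨h.2, h.1⟩),
          Sym2.eq_swap, min_comm]
      · rw [if_neg h, if_neg (show ¬(covered M v ∧ covered M u) from fun h' => h ⟨h'.2, h'.1⟩),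
          Sym2.eq_swap]⟩

/-- The total cost of a set of edges. -/
noncomputable def cw (w : Sym2 V → ℝ) (M F : Finset (Sym2 V)) : ℝ := ∑ e ∈ F, cost w M e

/-- The number of vertices of the 3-path `p` covered by `M`. -/
noncomputable def kcnt (M : Finset (Sym2 V)) (p : P3 V) : ℕ :=
  (p.verts.filter fun v => covered M v).card

/-- Exactly one of the two edges of `p` lies in `M`. -/
def exOne (M : Finset (Sym2 V)) (p : P3 V) : Prop :=
  (s(p.x, p.y) ∈ M ∧ s(p.y, p.z) ∉ M) ∨ (s(p.x, p.y) ∉ M ∧ s(p.y, p.z) ∈ M)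

def cls1 (M : Finset (Sym2 V)) (p : P3 V) : Prop := kcnt M p = 0
def cls2 (M : Finset (Sym2 V)) (p : P3 V) : Prop := kcnt M p = 1 ∧ ¬ covered M p.y
def cls3 (M : Finset (Sym2 V)) (p : P3 V) : Prop := kcnt M p = 1 ∧ covered M p.y
def cls4 (M : Finset (Sym2 V)) (p : P3 V) : Prop := kcnt M p = 2 ∧ ¬ covered M p.y
def cls5 (M : Finset (Sym2 V)) (p : P3 V) : Prop := kcnt M p = 2 ∧ covered M p.y ∧ exOne M p
def cls6 (M : Finset (Sym2 V)) (p : P3 V) : Prop :=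
  kcnt M p = 2 ∧ covered M p.y ∧ s(p.x, p.y) ∉ M ∧ s(p.y, p.z) ∉ M
def cls7 (M : Finset (Sym2 V)) (p : P3 V) : Prop := kcnt M p = 3 ∧ exOne M p
def cls8 (M : Finset (Sym2 V)) (p : P3 V) : Prop :=
  kcnt M p = 3 ∧ s(p.x, p.y) ∉ M ∧ s(p.y, p.z) ∉ M

/-- The subset of a set of 3-paths satisfying a predicate. -/
noncomputable def psel (P : Finset (P3 V)) (c : P3 V → Prop) : Finset (P3 V) := P.filter c

/-- The set of all edges of the 3-paths in `S`. -/
def Esub (S : Finset (P3 V)) : Finset (Sym2 V) := S.biUnion P3.edges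

/-- The heaviest edge of a 3-path (the edge `xy` in case of a tie). -/
noncomputable def heavy (w : Sym2 V → ℝ) (p : P3 V) : Sym2 V :=
  if w s(p.y, p.z) ≤ w s(p.x, p.y) then s(p.x, p.y) else s(p.y, p.z)

noncomputable def X1 (w : Sym2 V → ℝ) (P : Finset (P3 V)) (M : Finset (Sym2 V)) :
    Finset (Sym2 V) := (psel P (cls1 M)).image (heavy w)
noncomputable def X2 (P : Finset (P3 V)) (M : Finset (Sym2 V)) : Finset (Sym2 V) :=
  (psel P (cls2 M)).image fun p => if covered M p.x then s(p.x, p.y) else s(p.y, p.z)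
noncomputable def X3 (w : Sym2 V → ℝ) (P : Finset (P3 V)) (M : Finset (Sym2 V)) :
    Finset (Sym2 V) := (psel P (cls3 M)).image (heavy w)
noncomputable def X4 (w : Sym2 V → ℝ) (P : Finset (P3 V)) (M : Finset (Sym2 V)) :
    Finset (Sym2 V) := (psel P (cls4 M)).image (heavy w)
noncomputable def X5 (P : Finset (P3 V)) (M : Finset (Sym2 V)) : Finset (Sym2 V) :=
  (psel P (cls5 M)).image fun p => if s(p.x, p.y) ∈ M then s(p.y, p.z) else s(p.x, p.y)
noncomputable def X6 (P : Finset (P3 V)) (M : Finset (Sym2 V)) : Finset (Sym2 V) :=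
  (psel P (cls6 M)).image fun p => if covered M p.x then s(p.y, p.z) else s(p.x, p.y)
noncomputable def X7 (P : Finset (P3 V)) (M : Finset (Sym2 V)) : Finset (Sym2 V) :=
  (psel P (cls7 M)).image fun p => if s(p.x, p.y) ∈ M then s(p.y, p.z) else s(p.x, p.y)
noncomputable def X8 (w : Sym2 V → ℝ) (P : Finset (P3 V)) (M : Finset (Sym2 V)) :
    Finset (Sym2 V) := (psel P (cls8 M)).image (heavy w)

noncomputable def Y1 (w : Sym2 V → ℝ) (P : Finset (P3 V)) (M : Finset (Sym2 V)) :
    Finset (Sym2 V) := Esub (psel P (cls1 M)) \ X1 w P M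
noncomputable def Y2 (P : Finset (P3 V)) (M : Finset (Sym2 V)) : Finset (Sym2 V) :=
  Esub (psel P (cls2 M)) \ X2 P M
noncomputable def Y3 (w : Sym2 V → ℝ) (P : Finset (P3 V)) (M : Finset (Sym2 V)) :
    Finset (Sym2 V) := Esub (psel P (cls3 M)) \ X3 w P M
noncomputable def Y4 (w : Sym2 V → ℝ) (P : Finset (P3 V)) (M : Finset (Sym2 V)) :
    Finset (Sym2 V) := Esub (psel P (cls4 M)) \ X4 w P M
noncomputable def Y5 (P : Finset (P3 V)) (M : Finset (Sym2 V)) : Finset (Sym2 V) :=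
  Esub (psel P (cls5 M)) \ X5 P M
noncomputable def Y6 (P : Finset (P3 V)) (M : Finset (Sym2 V)) : Finset (Sym2 V) :=
  Esub (psel P (cls6 M)) \ X6 P M
noncomputable def Y7 (P : Finset (P3 V)) (M : Finset (Sym2 V)) : Finset (Sym2 V) :=
  Esub (psel P (cls7 M)) \ X7 P M
noncomputable def Y8 (w : Sym2 V → ℝ) (P : Finset (P3 V)) (M : Finset (Sym2 V)) :
    Finset (Sym2 V) := Esub (psel P (cls8 M)) \ X8 w P M

/-- An edge is a middle edge (w.r.t. `M`) if exactly one of its endpoints lies in `V(M)`. -/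
def isMiddle (M : Finset (Sym2 V)) (e : Sym2 V) : Prop :=
  ∃ u v : V, e = s(u, v) ∧ covered M u ∧ ¬ covered M v

/-- Two edges share a vertex. -/
def shares (e f : Sym2 V) : Prop := ∃ v, v ∈ e ∧ v ∈ f

/-- `g` is a middle edge of some 3-path in `S`. -/
def middleIn (M : Finset (Sym2 V)) (S : Finset (P3 V)) (g : Sym2 V) : Prop :=
  (∃ p ∈ S, g ∈ p.edges) ∧ isMiddle M g

/-- The 3-paths of `P` lying in classes 2, 3 or 4. -/
noncomputable def P234 (P : Finset (P3 V)) (M : Finset (Sym2 V)) : Finset (P3 V) :=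
  psel P fun p => cls2 M p ∨ cls3 M p ∨ cls4 M p

/-- `M_1`: edges of `M` sharing a vertex with at least one middle edge of a 3-path of `P*_6`. -/
noncomputable def Mset1 (P : Finset (P3 V)) (M : Finset (Sym2 V)) : Finset (Sym2 V) :=
  M.filter fun f => ∃ g, middleIn M (psel P (cls6 M)) g ∧ shares f g

/-- `M_2`: edges of `M` sharing a vertex with at least one middle edge, all middle edges met
belonging to 3-paths of `P*_2 ∪ P*_3 ∪ P*_4`. -/
noncomputable def Mset2 (P : Finset (P3 V)) (M : Finset (Sym2 V)) : Finset (Sym2 V) :=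
  M.filter fun f =>
    (∃ g, middleIn M P g ∧ shares f g) ∧
    ∀ g, middleIn M P g → shares f g → middleIn M (P234 P M) g

/-- `M_3 = M ∩ E(P*_7)`. -/
noncomputable def Mset3 (P : Finset (P3 V)) (M : Finset (Sym2 V)) : Finset (Sym2 V) :=
  M ∩ Esub (psel P (cls7 M))

/-- `M_4 = M ∩ E(P*_5)`. -/
noncomputable def Mset4 (P : Finset (P3 V)) (M : Finset (Sym2 V)) : Finset (Sym2 V) :=
  M ∩ Esub (psel P (cls5 M))

/-- The middle edges of 3-paths of `P*_6`. -/
noncomputable def mid6 (P : Finset (P3 V)) (M : Finset (Sym2 V)) : Finset (Sym2 V) :=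
  (Esub (psel P (cls6 M))).filter (isMiddle M)

/-- `M'_1`: edges of `M_1` meeting exactly one middle edge of a 3-path of `P*_6` and
no middle edge of a 3-path of `P*_2 ∪ P*_3 ∪ P*_4`. -/
noncomputable def Mset1' (P : Finset (P3 V)) (M : Finset (Sym2 V)) : Finset (Sym2 V) :=
  (Mset1 P M).filter fun f =>
    ((mid6 P M).filter fun g => shares f g).card = 1 ∧
    ∀ g, middleIn M (P234 P M) g → ¬ shares f g

/-- `M''_1`: edges of `M_1` meeting two middle edges of 3-paths of `P*_6`. -/
noncomputable def Mset1'' (P : Finset (P3 V)) (M : Finset (Sym2 V)) : Finset (Sym2 V) :=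
  (Mset1 P M).filter fun f => ((mid6 P M).filter fun g => shares f g).card = 2

/-- `M'''_1`: edges of `M_1` meeting exactly one middle edge of a 3-path of `P*_6` and
at least one middle edge of a 3-path of `P*_2 ∪ P*_3 ∪ P*_4`. -/
noncomputable def Mset1''' (P : Finset (P3 V)) (M : Finset (Sym2 V)) : Finset (Sym2 V) :=
  (Mset1 P M).filter fun f =>
    ((mid6 P M).filter fun g => shares f g).card = 1 ∧
    ∃ g, middleIn M (P234 P M) g ∧ shares f g

/-- Assumption on `P*`: for every 3-path `xyz ∈ P*` with `y ∉ V(M)` and `x, z ∈ V(M)`,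
the vertices `x` and `z` lie in two distinct edges of `M`. -/
def Ass (P : Finset (P3 V)) (M : Finset (Sym2 V)) : Prop :=
  ∀ p ∈ P, ¬ covered M p.y → covered M p.x → covered M p.z →
    ∃ e ∈ M, ∃ f ∈ M, p.x ∈ e ∧ p.z ∈ f ∧ e ≠ f

/-- An admissible edge w.r.t. `M`: either both endpoints are in `V(M)` and lie in two distinct
edges of `M`, or exactly one endpoint is in `V(M)`. -/
def goodEdge (M : Finset (Sym2 V)) (e : Sym2 V) : Prop :=
  (∃ u v : V, e = s(u, v) ∧ covered M u ∧ covered M v ∧ ∀ f ∈ M, ¬(u ∈ f ∧ v ∈ f)) ∨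
  (∃ u v : V, e = s(u, v) ∧ covered M u ∧ ¬ covered M v)


end MW3PP

/-!
The heavier edges of the 3-paths of `P*`, one per path, are pairwise vertex-disjoint, so they form a
matching of size `n/3` of weight `∑_{xyz ∈ P*} max {w(xy), w(yz)}`; by the maximality of `M` this is
at most `w(M)`, and the eight classes are disjoint parts of `P*`. Within a class, `X_i` takes one
edge of each 3-path and `Y_i` the other one, so each of them weighs at most the sum of the heavier
edges.
-/

namespace MW3PP

variable {V : Type*}

lemma weight_heavy (w : Sym2 V → ℝ) (p : P3 V) :
    w (heavy w p) = max (w s(p.x, p.y)) (w s(p.y, p.z)) := by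
  unfold heavy
  split_ifs with h
  · exact (max_eq_left h).symm
  · exact (max_eq_right (le_of_not_ge h)).symm

variable [DecidableEq V]

namespace P3

variable {p : P3 V} {e : Sym2 V}

lemma mem_edges : e ∈ p.edges ↔ e = s(p.x, p.y) ∨ e = s(p.y, p.z) := by
  simp [edges]

lemma xy_mem_edges (p : P3 V) : s(p.x, p.y) ∈ p.edges := by simp [edges]

lemma yz_mem_edges (p : P3 V) : s(p.y, p.z) ∈ p.edges := by simp [edges]

lemma ite_mem_edges (c : Prop) [Decidable c] {f : Sym2 V} (he : e ∈ p.edges)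
    (hf : f ∈ p.edges) : (if c then e else f) ∈ p.edges :=
  ite_mem.mpr ⟨fun _ => he, fun _ => hf⟩

lemma y_mem_of_mem_edges (he : e ∈ p.edges) : p.y ∈ e := by
  rcases mem_edges.mp he with rfl | rfl <;> simp

lemma mem_verts_of_mem_edges (he : e ∈ p.edges) {v : V} (hv : v ∈ e) : v ∈ p.verts := by
  rcases mem_edges.mp he with rfl | rfl <;> rcases Sym2.mem_iff.mp hv with rfl | rfl <;>
    simp [verts]

lemma not_isDiag_of_mem_edges (he : e ∈ p.edges) : ¬ e.IsDiag := by
  rcases mem_edges.mp he with rfl | rfl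
  · exact Sym2.mk_isDiag_iff.not.mpr p.hxy
  · exact Sym2.mk_isDiag_iff.not.mpr p.hyz

lemma sum_edges (w : Sym2 V → ℝ) (p : P3 V) : ∑ e ∈ p.edges, w e = p.wt w := by
  have hne : s(p.x, p.y) ≠ s(p.y, p.z) := by
    rw [Ne, Sym2.eq_iff, not_or]
    exact ⟨fun h => p.hxy h.1, fun h => p.hxz h.1⟩
  rw [edges, Finset.sum_pair hne, wt]

lemma le_max_of_mem_edges (w : Sym2 V → ℝ) (he : e ∈ p.edges) :
    w e ≤ max (w s(p.x, p.y)) (w s(p.y, p.z)) := by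
  rcases mem_edges.mp he with rfl | rfl
  · exact le_max_left _ _
  · exact le_max_right _ _

lemma wt_sub_le_max_of_mem_edges (w : Sym2 V → ℝ) (he : e ∈ p.edges) :
    p.wt w - w e ≤ max (w s(p.x, p.y)) (w s(p.y, p.z)) := by
  rcases mem_edges.mp he with rfl | rfl <;> simp [wt]

end P3

lemma heavy_mem_edges (w : Sym2 V → ℝ) (p : P3 V) : heavy w p ∈ p.edges :=
  P3.ite_mem_edges _ p.xy_mem_edges p.yz_mem_edges

section EdgeSelection

variable {S : Finset (P3 V)} {g : P3 V → Sym2 V}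

lemma pairwiseDisjoint_edges (hS : (S : Set (P3 V)).PairwiseDisjoint P3.verts) :
    (S : Set (P3 V)).PairwiseDisjoint P3.edges := by
  intro p hp q hq hne
  refine Finset.disjoint_left.mpr fun e hep heq => ?_
  have hy := P3.y_mem_of_mem_edges hep
  exact Finset.disjoint_left.mp (hS hp hq hne) (P3.mem_verts_of_mem_edges hep hy)
    (P3.mem_verts_of_mem_edges heq hy)

lemma ew_Esub (hS : (S : Set (P3 V)).PairwiseDisjoint P3.verts) (w : Sym2 V → ℝ) :
    ew w (Esub S) = pw w S := by
  rw [ew, Esub, Finset.sum_biUnion (pairwiseDisjoint_edges hS), pw]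
  exact Finset.sum_congr rfl fun p _ => P3.sum_edges w p

lemma injOn_of_mem_edges (hS : (S : Set (P3 V)).PairwiseDisjoint P3.verts)
    (hg : ∀ p ∈ S, g p ∈ p.edges) : Set.InjOn g S := by
  intro p hp q hq hpq
  by_contra hne
  have hyq : p.y ∈ q.verts :=
    P3.mem_verts_of_mem_edges (hg q hq) (hpq ▸ P3.y_mem_of_mem_edges (hg p hp))
  exact Finset.disjoint_left.mp (hS hp hq hne) (by simp [P3.verts]) hyq

lemma isMatching_image (hS : (S : Set (P3 V)).PairwiseDisjoint P3.verts)
    (hg : ∀ p ∈ S, g p ∈ p.edges) : IsMatching (S.image g) := by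
  refine ⟨?_, ?_⟩
  · simp only [Finset.mem_image]
    rintro _ ⟨p, hp, rfl⟩
    exact P3.not_isDiag_of_mem_edges (hg p hp)
  · simp only [Finset.mem_image]
    rintro _ ⟨p, hp, rfl⟩ _ ⟨q, hq, rfl⟩ hne v hvp hvq
    have hpq : p ≠ q := fun h => hne (h ▸ rfl)
    exact Finset.disjoint_left.mp (hS hp hq hpq) (P3.mem_verts_of_mem_edges (hg p hp) hvp)
      (P3.mem_verts_of_mem_edges (hg q hq) hvq)

lemma ew_image (hS : (S : Set (P3 V)).PairwiseDisjoint P3.verts)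
    (hg : ∀ p ∈ S, g p ∈ p.edges) (w : Sym2 V → ℝ) :
    ew w (S.image g) = ∑ p ∈ S, w (g p) :=
  Finset.sum_image (injOn_of_mem_edges hS hg)

lemma max_ew_image_ew_sdiff_le_maxSum (hS : (S : Set (P3 V)).PairwiseDisjoint P3.verts)
    (hg : ∀ p ∈ S, g p ∈ p.edges) (w : Sym2 V → ℝ) :
    max (ew w (S.image g)) (ew w (Esub S \ S.image g)) ≤ maxSum w S := by
  have hsub : S.image g ⊆ Esub S := by
    simp only [Finset.image_subset_iff, Esub, Finset.mem_biUnion]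
    exact fun p hp => ⟨p, hp, hg p hp⟩
  refine max_le ?_ ?_
  · rw [ew_image hS hg]
    exact Finset.sum_le_sum fun p hp => P3.le_max_of_mem_edges w (hg p hp)
  · rw [ew, Finset.sum_sdiff_eq_sub hsub, ← ew, ← ew, ew_Esub hS, ew_image hS hg, pw,
      ← Finset.sum_sub_distrib]
    exact Finset.sum_le_sum fun p hp => P3.wt_sub_le_max_of_mem_edges w (hg p hp)

end EdgeSelection

/-- The classes are mutually exclusive but not exhaustive: a 3-path with both edges in `M` lies in
none of them. -/
lemma sum_ite_cls_le (M : Finset (Sym2 V)) (p : P3 V) {m : ℝ} (hm : 0 ≤ m) :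
    (if cls1 M p then m else 0) + (if cls2 M p then m else 0) +
    (if cls3 M p then m else 0) + (if cls4 M p then m else 0) +
    (if cls5 M p then m else 0) + (if cls6 M p then m else 0) +
    (if cls7 M p then m else 0) + (if cls8 M p then m else 0) ≤ m := by
  unfold cls1 cls2 cls3 cls4 cls5 cls6 cls7 cls8 exOne
  generalize kcnt M p = k
  split_ifs <;> first | linarith | omega | tauto

lemma sum_maxSum_cls_le_maxSum {w : Sym2 V → ℝ} (hw : ∀ e, 0 ≤ w e) (M : Finset (Sym2 V))
    (S : Finset (P3 V)) :
    maxSum w (psel S (cls1 M)) + maxSum w (psel S (cls2 M)) +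
      maxSum w (psel S (cls3 M)) + maxSum w (psel S (cls4 M)) +
      maxSum w (psel S (cls5 M)) + maxSum w (psel S (cls6 M)) +
      maxSum w (psel S (cls7 M)) + maxSum w (psel S (cls8 M)) ≤ maxSum w S := by
  simp only [maxSum, psel, Finset.sum_filter, ← Finset.sum_add_distrib]
  exact Finset.sum_le_sum fun p _ => sum_ite_cls_le M p (le_max_of_le_left (hw _))

lemma IsPacking.pairwiseDisjoint [Fintype V] {P : Finset (P3 V)} (hP : IsPacking P) :
    (P : Set (P3 V)).PairwiseDisjoint P3.verts :=
  fun p hp q hq => hP.2.1 p hp q hq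

lemma maxSum_le_ew_of_isMaxMatchingOfSize [Fintype V] {w : Sym2 V → ℝ} {P : Finset (P3 V)}
    {M : Finset (Sym2 V)} (hP : IsPacking P)
    (hM : IsMaxMatchingOfSize w (Fintype.card V / 3) M) : maxSum w P ≤ ew w M := by
  have hS := hP.pairwiseDisjoint
  have hg : ∀ p ∈ P, heavy w p ∈ p.edges := fun p _ => heavy_mem_edges w p
  calc maxSum w P = ew w (P.image (heavy w)) := by
        rw [ew_image hS hg]
        exact Finset.sum_congr rfl fun p _ => (weight_heavy w p).symm
    _ ≤ ew w M := hM.2.2 _ (isMatching_image hS hg) <| by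
        rw [Finset.card_image_of_injOn (injOn_of_mem_edges hS hg), hP.1]

end MW3PP

namespace MW3PP

variable {V : Type*} [Fintype V] [DecidableEq V]

theorem statement_16_general (n : ℕ) (hn : Fintype.card V = n)
    (w : Sym2 V → ℝ) (hw : ∀ e : Sym2 V, 0 ≤ w e)
    (M : Finset (Sym2 V)) (hM : IsMaxMatchingOfSize w (n / 3) M)
    (Pstar : Finset (P3 V)) (hP : IsMaxPacking w Pstar) :
    (maxSum w (psel Pstar (cls1 M)) + maxSum w (psel Pstar (cls2 M)) +
      maxSum w (psel Pstar (cls3 M)) + maxSum w (psel Pstar (cls4 M)) +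
      maxSum w (psel Pstar (cls5 M)) + maxSum w (psel Pstar (cls6 M)) +
      maxSum w (psel Pstar (cls7 M)) + maxSum w (psel Pstar (cls8 M)) ≤ ew w M) ∧
    max (ew w (X1 w Pstar M)) (ew w (Y1 w Pstar M)) ≤ maxSum w (psel Pstar (cls1 M)) ∧
    max (ew w (X2 Pstar M)) (ew w (Y2 Pstar M)) ≤ maxSum w (psel Pstar (cls2 M)) ∧
    max (ew w (X3 w Pstar M)) (ew w (Y3 w Pstar M)) ≤ maxSum w (psel Pstar (cls3 M)) ∧
    max (ew w (X4 w Pstar M)) (ew w (Y4 w Pstar M)) ≤ maxSum w (psel Pstar (cls4 M)) ∧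
    max (ew w (X5 Pstar M)) (ew w (Y5 Pstar M)) ≤ maxSum w (psel Pstar (cls5 M)) ∧
    max (ew w (X6 Pstar M)) (ew w (Y6 Pstar M)) ≤ maxSum w (psel Pstar (cls6 M)) ∧
    max (ew w (X7 Pstar M)) (ew w (Y7 Pstar M)) ≤ maxSum w (psel Pstar (cls7 M)) ∧
    max (ew w (X8 w Pstar M)) (ew w (Y8 w Pstar M)) ≤ maxSum w (psel Pstar (cls8 M)) := by
  subst hn
  have hpack := hP.1
  have hS (c : P3 V → Prop) : (↑(psel Pstar c) : Set (P3 V)).PairwiseDisjoint P3.verts :=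
    hpack.pairwiseDisjoint.subset (Finset.coe_subset.mpr (Finset.filter_subset _ _))
  have bound (c : P3 V → Prop) {g : P3 V → Sym2 V} (hg : ∀ p, g p ∈ p.edges) :=
    max_ew_image_ew_sdiff_le_maxSum (hS c) (fun p _ => hg p) w
  have xy_or_yz (c : P3 V → Prop) [DecidablePred c] (p : P3 V) :
      (if c p then s(p.x, p.y) else s(p.y, p.z)) ∈ p.edges :=
    P3.ite_mem_edges _ p.xy_mem_edges p.yz_mem_edges
  have yz_or_xy (c : P3 V → Prop) [DecidablePred c] (p : P3 V) :
      (if c p then s(p.y, p.z) else s(p.x, p.y)) ∈ p.edges :=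
    P3.ite_mem_edges _ p.yz_mem_edges p.xy_mem_edges
  refine ⟨(sum_maxSum_cls_le_maxSum hw M Pstar).trans
    (maxSum_le_ew_of_isMaxMatchingOfSize hpack hM), ?_, ?_, ?_, ?_, ?_, ?_, ?_, ?_⟩
  exacts [bound _ (heavy_mem_edges w), bound _ (xy_or_yz (fun p => covered M p.x)),
    bound _ (heavy_mem_edges w), bound _ (heavy_mem_edges w),
    bound _ (yz_or_xy (fun p => s(p.x, p.y) ∈ M)), bound _ (yz_or_xy (fun p => covered M p.x)),
    bound _ (yz_or_xy (fun p => s(p.x, p.y) ∈ M)), bound _ (heavy_mem_edges w)]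

theorem statement_16 (n : ℕ) (hn : Fintype.card V = n) (h3 : 3 ∣ n)
    (w : Sym2 V → ℝ) (hw : ∀ e : Sym2 V, 0 ≤ w e)
    (M : Finset (Sym2 V)) (hM : IsMaxMatchingOfSize w (n / 3) M)
    (Pstar : Finset (P3 V)) (hP : IsMaxPacking w Pstar) (hAss : Ass Pstar M) :
    (maxSum w (psel Pstar (cls1 M)) + maxSum w (psel Pstar (cls2 M)) +
      maxSum w (psel Pstar (cls3 M)) + maxSum w (psel Pstar (cls4 M)) +
      maxSum w (psel Pstar (cls5 M)) + maxSum w (psel Pstar (cls6 M)) +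
      maxSum w (psel Pstar (cls7 M)) + maxSum w (psel Pstar (cls8 M)) ≤ ew w M) ∧
    max (ew w (X1 w Pstar M)) (ew w (Y1 w Pstar M)) ≤ maxSum w (psel Pstar (cls1 M)) ∧
    max (ew w (X2 Pstar M)) (ew w (Y2 Pstar M)) ≤ maxSum w (psel Pstar (cls2 M)) ∧
    max (ew w (X3 w Pstar M)) (ew w (Y3 w Pstar M)) ≤ maxSum w (psel Pstar (cls3 M)) ∧
    max (ew w (X4 w Pstar M)) (ew w (Y4 w Pstar M)) ≤ maxSum w (psel Pstar (cls4 M)) ∧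
    max (ew w (X5 Pstar M)) (ew w (Y5 Pstar M)) ≤ maxSum w (psel Pstar (cls5 M)) ∧
    max (ew w (X6 Pstar M)) (ew w (Y6 Pstar M)) ≤ maxSum w (psel Pstar (cls6 M)) ∧
    max (ew w (X7 Pstar M)) (ew w (Y7 Pstar M)) ≤ maxSum w (psel Pstar (cls7 M)) ∧
    max (ew w (X8 w Pstar M)) (ew w (Y8 w Pstar M)) ≤ maxSum w (psel Pstar (cls8 M)) :=
  statement_16_general n hn w hw M hM Pstar hP

end MW3PP
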